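/- arXiv:1611.00926 — 2 statements merged into one kernel-verified Lean document; each statement's English description precedes it below -/
import Mathlib

section
/- Let (X,d) be a metric space of finite diameter, let x ∈ X, let d ≥ 2 be an integer, and let r_1 > r_2 > … > r_d > 0 be radii satisfying r_l ≤ r_{l−1}/9 for every l ∈ {2,…,d}. Define the open sets U^1 := X \ closedBall(x, r_1), U^l := ball(x, r_{l−1}/9) \ closedBall(x, r_l) for 2 ≤ l ≤ d−1, and U^d := ball(x, r_d). Then for every pair of distinct indices i ≠ j and every u ∈ U^i, v ∈ U^j, one has d(u,v) ≥ 4·min{diam(U^i), diam(U^j)}; in particular dist(U^i, U^j) ≥ 4·min{diam(U^i), diam(U^j)} whenever both sets are nonempty. -/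
open Metric

/-- The distance between two subsets of a metric space:
`dist(U,V) = inf { d(u,v) : u ∈ U, v ∈ V }`. -/
noncomputable def setDist {X : Type*} [MetricSpace X] (U V : Set X) : ℝ :=
  sInf (Set.image2 dist U V)

theorem stmt5 {X : Type*} [MetricSpace X]
    (hX : Bornology.IsBounded (Set.univ : Set X))
    (x : X) (d : ℕ) (hd : 2 ≤ d) (r : ℕ → ℝ)
    (hpos : ∀ l, 1 ≤ l → l ≤ d → 0 < r l)
    (hdec : ∀ l, 2 ≤ l → l ≤ d → r l < r (l - 1))
    (hfac : ∀ l, 2 ≤ l → l ≤ d → r l ≤ r (l - 1) / 9)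
    (U : ℕ → Set X)
    (hU1 : U 1 = (closedBall x (r 1))ᶜ)
    (hUmid : ∀ l, 2 ≤ l → l ≤ d - 1 →
      U l = ball x (r (l - 1) / 9) \ closedBall x (r l))
    (hUd : U d = ball x (r d)) :
    ∀ i j, 1 ≤ i → i ≤ d → 1 ≤ j → j ≤ d → i ≠ j →
      (∀ u ∈ U i, ∀ v ∈ U j, 4 * min (diam (U i)) (diam (U j)) ≤ dist u v) ∧
      ((U i).Nonempty → (U j).Nonempty →
        4 * min (diam (U i)) (diam (U j)) ≤ setDist (U i) (U j)) := by
  have rmono : ∀ a b, 1 ≤ a → a ≤ b → b ≤ d → r b ≤ r a := by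
    intro a b ha hab
    induction b, hab using Nat.le_induction with
    | base => intro _; exact le_rfl
    | succ b hb ih =>
      intro hbd
      have h1 : r (b + 1) < r b := by
        have := hdec (b + 1) (by omega) hbd
        simpa using this
      exact le_trans h1.le (ih (by omega))
  have key : ∀ i j, 1 ≤ i → i < j → j ≤ d →
      ∀ u ∈ U i, ∀ v ∈ U j, 4 * min (diam (U i)) (diam (U j)) ≤ dist u v := by
    intro i j hi hij hjd u hu v hv
    set ρ := r (j - 1) / 9 with hρ
    have hj2 : 2 ≤ j := by omega
    have hρpos : 0 < ρ := by
      have := hpos (j - 1) (by omega) (by omega)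
      positivity
    have hsub : U j ⊆ ball x ρ := by
      by_cases hjd' : j = d
      · rw [hjd', hUd, ← hjd']
        exact ball_subset_ball (hfac j hj2 hjd)
      · rw [hUmid j hj2 (by omega)]
        exact Set.diff_subset
    have hdiam : diam (U j) ≤ 2 * ρ := by
      calc diam (U j) ≤ diam (ball x ρ) := diam_mono hsub isBounded_ball
        _ ≤ 2 * ρ := diam_ball hρpos.le
    have hv' : dist v x < ρ := by
      have := hsub hv; rwa [mem_ball] at this
    have hu' : r i < dist u x := by
      by_cases hi1 : i = 1
      · subst hi1
        rw [hU1] at hu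
        simpa [mem_closedBall, not_le] using hu
      · rw [hUmid i (by omega) (by omega)] at hu
        have := hu.2
        simpa [mem_closedBall, not_le] using this
    have hri : r (j - 1) ≤ r i := rmono i (j - 1) hi (by omega) (by omega)
    have htri : dist u x ≤ dist u v + dist v x := dist_triangle u v x
    calc 4 * min (diam (U i)) (diam (U j)) ≤ 4 * diam (U j) :=
          mul_le_mul_of_nonneg_left (min_le_right _ _) (by norm_num)
      _ ≤ 4 * (2 * ρ) := by linarith
      _ = 8 * ρ := by ring
      _ = r (j - 1) - ρ := by rw [hρ]; ring
      _ ≤ r i - ρ := by linarith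
      _ ≤ dist u v := by linarith
  have main : ∀ i j, 1 ≤ i → i ≤ d → 1 ≤ j → j ≤ d → i ≠ j →
      ∀ u ∈ U i, ∀ v ∈ U j, 4 * min (diam (U i)) (diam (U j)) ≤ dist u v := by
    intro i j hi hid hj hjd hne u hu v hv
    rcases lt_or_gt_of_ne hne with h | h
    · exact key i j hi h hjd u hu v hv
    · have := key j i hj h hid v hv u hu
      rwa [min_comm, dist_comm] at this
  intro i j hi hid hj hjd hne
  refine ⟨main i j hi hid hj hjd hne, fun hUi hUj => ?_⟩
  apply le_csInf (Set.Nonempty.image2 hUi hUj)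
  rintro b ⟨u, hu, v, hv, rfl⟩
  exact main i j hi hid hj hjd hne u hu v hv
end

section
/- Let m ≥ 1 be an integer and η > 0. (a) For every t ∈ ℝ^m, the open cube Q(t, η) equals the union over all a ∈ {−2/5, 2/5}^m of the open cubes Q(t + aη, 3η/5), where aη denotes the vector with coordinates a_i·η. (b) Set η̃ = (9/10)η and, for r ∈ ℤ^m, set t_r = ((2r_1+1)η̃, …, (2r_m+1)η̃). Then every point x ∈ ℝ^m belongs to at most 2^m of the cubes in the collection { Q(t_r + aη, 3η/5) : r ∈ ℤ^m, a ∈ {−2/5, 2/5}^m }. -/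
/-!
Part (a) holds coordinatewise: `(s - η, s + η)` is the union of `(s - η, s + η/5)` and
`(s - η/5, s + η)`, and a point picks the half on its side of `s`.

For part (b), fix a shift `a`. In each coordinate the centres `t_r + aη` run through a lattice
of step `9η/5`, at least the side `6η/5` of the cubes, so the cubes of the collection with shift
`a` are pairwise disjoint. A point therefore lies in at most one cube per shift, and there are
`2^m` shifts.
-/

/-- The open cube `Q(t, ρ)` in `ℝ^m` centered at `t` with half-side `ρ`. -/
def cube (m : ℕ) (t : Fin m → ℝ) (ρ : ℝ) : Set (Fin m → ℝ) :=
  {x | ∀ i, |x i - t i| < ρ}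

theorem abs_sub_lt_iff_exists_shift (y s η : ℝ) :
    |y - s| < η ↔ ∃ a : ℝ, (a = -(2 / 5) ∨ a = 2 / 5) ∧ |y - (s + a * η)| < 3 * η / 5 := by
  constructor
  · intro h
    obtain ⟨h₁, h₂⟩ := abs_lt.mp h
    rcases lt_or_ge y s with hys | hys
    · exact ⟨-(2 / 5), .inl rfl, abs_lt.mpr ⟨by linarith, by linarith⟩⟩
    · exact ⟨2 / 5, .inr rfl, abs_lt.mpr ⟨by linarith, by linarith⟩⟩
  · rintro ⟨a, ha | ha, h⟩ <;> subst ha <;> obtain ⟨h₁, h₂⟩ := abs_lt.mp h <;>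
      exact abs_lt.mpr ⟨by linarith, by linarith⟩

theorem cube_eq_iUnion_shift (m : ℕ) (t : Fin m → ℝ) (η : ℝ) :
    cube m t η =
      ⋃ a ∈ {a : Fin m → ℝ | ∀ i, a i = -(2 / 5) ∨ a i = 2 / 5},
        cube m (fun i => t i + a i * η) (3 * η / 5) := by
  ext x
  simp only [cube, Set.mem_iUnion, Set.mem_ofPred_eq]
  rw [forall_congr' fun i => abs_sub_lt_iff_exists_shift (x i) (t i) η, Classical.skolem]
  exact exists_congr fun a => forall_and.trans exists_prop.symm

theorem Set.ncard_univ_pi {ι : Type*} [Fintype ι] {α : ι → Type*} (t : ∀ i, Set (α i)) :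
    (Set.pi Set.univ t).ncard = ∏ i, (t i).ncard := by
  simp only [← Nat.card_coe_set_eq, Nat.card_congr (Equiv.Set.univPi t), Nat.card_pi]

theorem finite_and_ncard_setOf_forall_eq_or_eq {ι α : Type*} [Fintype ι] {x y : α} (hxy : x ≠ y) :
    {a : ι → α | ∀ i, a i = x ∨ a i = y}.Finite ∧
      {a : ι → α | ∀ i, a i = x ∨ a i = y}.ncard = 2 ^ Fintype.card ι := by
  have h : {a : ι → α | ∀ i, a i = x ∨ a i = y} = Set.pi Set.univ fun _ => {x, y} := by
    ext a; simp
  rw [h, Set.ncard_univ_pi, Set.ncard_pair hxy, Finset.prod_const, Finset.card_univ]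
  exact ⟨Set.Finite.pi fun _ => Set.toFinite _, rfl⟩

theorem Int.eq_of_abs_sub_lt_of_abs_sub_lt {k k' : ℤ} {u c d ρ : ℝ} (hρ : 2 * ρ ≤ d)
    (hk : |u - (k * d + c)| < ρ) (hk' : |u - (k' * d + c)| < ρ) : k = k' := by
  have hd : 0 < d := by linarith [abs_nonneg (u - (k * d + c))]
  have hdist : |((k - k' : ℤ) : ℝ)| * d < d := by
    calc |((k - k' : ℤ) : ℝ)| * d = |((k - k' : ℤ) : ℝ) * d| := by rw [abs_mul, abs_of_pos hd]
      _ = |(u - (k' * d + c)) - (u - (k * d + c))| := by push_cast; ring_nf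
      _ ≤ |u - (k' * d + c)| + |u - (k * d + c)| := abs_sub _ _
      _ < d := by linarith
  have hlt : |k - k'| < 1 := by
    exact_mod_cast (mul_lt_iff_lt_one_left hd).mp hdist
  exact sub_eq_zero.mp (Int.abs_lt_one_iff.mp hlt)

def refinedCubesContaining (m : ℕ) (η : ℝ) (x : Fin m → ℝ) : Set ((Fin m → ℤ) × (Fin m → ℝ)) :=
  {q | (∀ i, q.2 i = -(2 / 5) ∨ q.2 i = 2 / 5) ∧
    x ∈ cube m (fun i => (2 * (q.1 i : ℝ) + 1) * (9 / 10 * η) + q.2 i * η) (3 * η / 5)}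

theorem eq_of_mem_cube_of_mem_cube {m : ℕ} {η : ℝ} (hη : 0 ≤ η) {x a : Fin m → ℝ}
    {r r' : Fin m → ℤ}
    (h : x ∈ cube m (fun i => (2 * (r i : ℝ) + 1) * (9 / 10 * η) + a i * η) (3 * η / 5))
    (h' : x ∈ cube m (fun i => (2 * (r' i : ℝ) + 1) * (9 / 10 * η) + a i * η) (3 * η / 5)) :
    r = r' := by
  funext i
  have hcenter : ∀ k : ℤ, (2 * (k : ℝ) + 1) * (9 / 10 * η) + a i * η
      = k * (9 / 5 * η) + (9 / 10 * η + a i * η) := fun k => by ring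
  have hi : |x i - ((2 * (r i : ℝ) + 1) * (9 / 10 * η) + a i * η)| < 3 * η / 5 := h i
  have hi' : |x i - ((2 * (r' i : ℝ) + 1) * (9 / 10 * η) + a i * η)| < 3 * η / 5 := h' i
  rw [hcenter] at hi hi'
  exact Int.eq_of_abs_sub_lt_of_abs_sub_lt (by linarith) hi hi'

theorem injOn_snd_refinedCubesContaining {m : ℕ} {η : ℝ} (hη : 0 ≤ η) (x : Fin m → ℝ) :
    Set.InjOn Prod.snd (refinedCubesContaining m η x) := by
  rintro ⟨r, a⟩ ⟨-, h⟩ ⟨r', a'⟩ ⟨-, h'⟩ (rfl : a = a')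
  obtain rfl := eq_of_mem_cube_of_mem_cube (r := r) (r' := r') (a := a) hη h h'
  rfl

theorem finite_and_ncard_refinedCubesContaining_le {m : ℕ} {η : ℝ} (hη : 0 ≤ η)
    (x : Fin m → ℝ) :
    (refinedCubesContaining m η x).Finite ∧ (refinedCubesContaining m η x).ncard ≤ 2 ^ m := by
  obtain ⟨hfin, hcard⟩ := finite_and_ncard_setOf_forall_eq_or_eq (ι := Fin m)
    (show (-(2 / 5) : ℝ) ≠ 2 / 5 by norm_num)
  have hmaps : ∀ q ∈ refinedCubesContaining m η x,
      q.2 ∈ {a : Fin m → ℝ | ∀ i, a i = -(2 / 5) ∨ a i = 2 / 5} := fun q hq => hq.1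
  have hinj := injOn_snd_refinedCubesContaining hη x
  refine ⟨.of_finite_image (hfin.subset (Set.image_subset_iff.mpr hmaps)) hinj, ?_⟩
  calc _ ≤ _ := Set.ncard_le_ncard_of_injOn Prod.snd hmaps hinj hfin
    _ = 2 ^ m := by rw [hcard, Fintype.card_fin]

theorem stmt6_general (m : ℕ) (η : ℝ) (hη : 0 < η) :
    -- (a) each cube of the grid is the union of its `2^m` shifted subcubes:
    (∀ t : Fin m → ℝ,
      cube m t η =
        ⋃ a ∈ {a : Fin m → ℝ | ∀ i, a i = -(2 / 5) ∨ a i = 2 / 5},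
          cube m (fun i => t i + a i * η) (3 * η / 5)) ∧
    -- (b) every point of `ℝ^m` lies in at most `2^m` cubes of the refined
    -- collection `{ Q(t_r + aη, 3η/5) : r ∈ ℤ^m, a ∈ {-2/5, 2/5}^m }`,
    -- where `t_r = ((2r₁+1)·(9/10)η, …, (2r_m+1)·(9/10)η)`:
    (∀ x : Fin m → ℝ,
      {q : (Fin m → ℤ) × (Fin m → ℝ) |
          (∀ i, q.2 i = -(2 / 5) ∨ q.2 i = 2 / 5) ∧
          x ∈ cube m
              (fun i => (2 * (q.1 i : ℝ) + 1) * (9 / 10 * η) + q.2 i * η)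
              (3 * η / 5)}.Finite ∧
      {q : (Fin m → ℤ) × (Fin m → ℝ) |
          (∀ i, q.2 i = -(2 / 5) ∨ q.2 i = 2 / 5) ∧
          x ∈ cube m
              (fun i => (2 * (q.1 i : ℝ) + 1) * (9 / 10 * η) + q.2 i * η)
              (3 * η / 5)}.ncard ≤ 2 ^ m) :=
  ⟨fun t => cube_eq_iUnion_shift m t η, finite_and_ncard_refinedCubesContaining_le hη.le⟩

theorem stmt6 (m : ℕ) (hm : 1 ≤ m) (η : ℝ) (hη : 0 < η) :
    -- (a) each cube of the grid is the union of its `2^m` shifted subcubes: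
    (∀ t : Fin m → ℝ,
      cube m t η =
        ⋃ a ∈ {a : Fin m → ℝ | ∀ i, a i = -(2 / 5) ∨ a i = 2 / 5},
          cube m (fun i => t i + a i * η) (3 * η / 5)) ∧
    -- (b) every point of `ℝ^m` lies in at most `2^m` cubes of the refined
    -- collection `{ Q(t_r + aη, 3η/5) : r ∈ ℤ^m, a ∈ {-2/5, 2/5}^m }`,
    -- where `t_r = ((2r₁+1)·(9/10)η, …, (2r_m+1)·(9/10)η)`:
    (∀ x : Fin m → ℝ,
      {q : (Fin m → ℤ) × (Fin m → ℝ) |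
          (∀ i, q.2 i = -(2 / 5) ∨ q.2 i = 2 / 5) ∧
          x ∈ cube m
              (fun i => (2 * (q.1 i : ℝ) + 1) * (9 / 10 * η) + q.2 i * η)
              (3 * η / 5)}.Finite ∧
      {q : (Fin m → ℤ) × (Fin m → ℝ) |
          (∀ i, q.2 i = -(2 / 5) ∨ q.2 i = 2 / 5) ∧
          x ∈ cube m
              (fun i => (2 * (q.1 i : ℝ) + 1) * (9 / 10 * η) + q.2 i * η)
              (3 * η / 5)}.ncard ≤ 2 ^ m) :=
  stmt6_general m η hη
end
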